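/- arXiv:1102.3932 — 3 statements merged into one kernel-verified Lean document; each statement's English description precedes it below -/
import Mathlib

section
/- (Restivo–Salemi factorization, infinite version.) Let P = {ε, 0, 00, 1, 11}. For every infinite binary overlap-free word x there exist a word p ∈ P and an infinite binary overlap-free word y such that x = p·μ(y). Moreover this factorization is unique: if p·μ(y) = p'·μ(y') with p, p' ∈ P and y, y' overlap-free, then p = p' and y = y'. -/
/-- An overlap: a word of the form a x a x a, with `a` a single letter. -/
def Overlap (w : List (Fin 2)) : Prop :=
  ∃ (a : Fin 2) (x : List (Fin 2)), w = [a] ++ x ++ [a] ++ x ++ [a]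

/-- `w` occurs as a (contiguous) factor of the infinite word `x`. -/
def FactorOf (w : List (Fin 2)) (x : ℕ → Fin 2) : Prop :=
  ∃ i, w = (List.range w.length).map (fun j => x (i + j))

/-- An infinite binary word is overlap-free if no finite factor is an overlap. -/
def OverlapFree (x : ℕ → Fin 2) : Prop :=
  ∀ w, FactorOf w x → ¬ Overlap w

/-- The Thue–Morse morphism applied to an infinite word. -/
def mu (x : ℕ → Fin 2) : ℕ → Fin 2 :=
  fun n => if n % 2 = 0 then x (n / 2) else 1 - x (n / 2)

/-- Prepend a finite word to an infinite word. -/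
def prepend (p : List (Fin 2)) (w : ℕ → Fin 2) : ℕ → Fin 2 :=
  fun n => if h : n < p.length then p.get ⟨n, h⟩ else w (n - p.length)

/-- `x` begins with the finite word `p`. -/
def BeginsWith (x : ℕ → Fin 2) (p : List (Fin 2)) : Prop :=
  ∀ i < p.length, x i = p.getD i 0

/-- The set of possible prefixes in the Restivo--Salemi factorization. -/
def RS : Set (List (Fin 2)) := {[], [0], [0, 0], [1], [1, 1]}

/-!
In an overlap-free binary word there is no cube `aaa`, no factor `ababa`, and no two squares
`aa`, `bb` three positions apart. Hence all squares `x n = x (n + 1)` with `n ≥ 1` sit at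
positions of one parity, so after a prefix of length 0, 1 or 2 every aligned pair of letters is
`01` or `10`, i.e. the rest of `x` is `μ y`; and `y` is overlap-free because `μ` and prefixing
carry overlaps to overlaps.

For uniqueness: `μ y` has no square at even positions, but has squares at arbitrarily large odd
positions since an overlap-free `y` is not eventually constant. This fixes `|p|` mod 2, and the
only prefixes in `RS` of equal parity and different lengths are `ε` and `aa`, which cannot both
precede a `μ`-image because `μ y` begins with `01` or `10`.
-/

/-- The factor `x i ⋯ x (i + 2p)` is an overlap. -/
def IsOverlapAt (x : ℕ → Fin 2) (i p : ℕ) : Prop :=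
  0 < p ∧ ∀ j ≤ p, x (i + j) = x (i + p + j)

theorem FactorOf.isOverlapAt_of_overlap {w : List (Fin 2)} {x : ℕ → Fin 2}
    (hf : FactorOf w x) (ho : Overlap w) : ∃ i p, IsOverlapAt x i p := by
  obtain ⟨a, t, rfl⟩ := ho
  obtain ⟨i, hw⟩ := hf
  set w := [a] ++ t ++ [a] ++ t ++ [a]
  -- `a t a t a` is both `(a t) (a t a)` and `(a t a) (t a)`
  have hleft : w = (a :: t) ++ (a :: t ++ [a]) := by simp [w]
  have hright : w = (a :: t ++ [a]) ++ (t ++ [a]) := by simp [w]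
  have hlen : w.length = 2 * t.length + 3 := by simp [w]; ring
  have hx : ∀ k < w.length, w[k]? = some (x (i + k)) := by
    intro k hk
    rw [hw]
    simp [List.getElem?_range hk]
  refine ⟨i, t.length + 1, by omega, fun j hj => ?_⟩
  have h1 : w[j]? = (a :: t ++ [a])[j]? := by
    rw [hright, List.getElem?_append_left (by simp; omega)]
  have h2 : w[t.length + 1 + j]? = (a :: t ++ [a])[j]? := by
    rw [hleft, List.getElem?_append_right (by simp)]
    simp
  have := (hx j (by omega)).symm.trans (h1.trans (h2.symm.trans (hx _ (by omega))))
  simpa [add_assoc] using this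

theorem IsOverlapAt.not_overlapFree {x : ℕ → Fin 2} {i p : ℕ} (h : IsOverlapAt x i p) :
    ¬ OverlapFree x := by
  obtain ⟨hp, hper⟩ := h
  set g := fun j => x (i + j)
  set u := (List.range p).map g
  have hw : (List.range (2 * p + 1)).map g = u ++ u ++ [g 0] := by
    have hshift : (List.range p).map (fun j => g (p + j)) = u :=
      List.map_congr_left fun j hj => by
        simpa [g, add_assoc] using (hper j (by simp at hj; omega)).symm
    have hlast : g (p + p) = g 0 := by
      have h0 := hper 0 (by omega)
      have hp' := hper p le_rfl
      simp only [g, add_zero, ← add_assoc] at h0 hp' ⊢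
      rw [← hp', ← h0]
    rw [show 2 * p + 1 = p + (p + 1) by ring, List.range_add, List.range_succ]
    simp [u, Function.comp_def, hshift, hlast]
  obtain ⟨q, rfl⟩ : ∃ q, p = q + 1 := ⟨p - 1, by omega⟩
  have hu : u = g 0 :: (List.range q).map (fun j => g (j + 1)) := by
    simp [u, List.range_succ_eq_map]
  intro hx
  refine hx ((List.range (2 * (q + 1) + 1)).map g)
    ⟨i, by rw [List.length_map, List.length_range]⟩
    ⟨g 0, (List.range q).map (fun j => g (j + 1)), ?_⟩
  rw [hw, hu]
  simp

theorem overlapFree_iff_forall_not_isOverlapAt {x : ℕ → Fin 2} :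
    OverlapFree x ↔ ∀ i p, ¬ IsOverlapAt x i p :=
  ⟨fun hx _ _ h => h.not_overlapFree hx, fun h _ hf ho =>
    let ⟨i, p, hip⟩ := hf.isOverlapAt_of_overlap ho; h i p hip⟩

theorem mu_two_mul (y : ℕ → Fin 2) (k : ℕ) : mu y (2 * k) = y k := by
  simp [mu]

theorem mu_two_mul_add_one (y : ℕ → Fin 2) (k : ℕ) : mu y (2 * k + 1) = 1 - y k := by
  simp [mu, Nat.add_mod, Nat.add_div]

theorem mu_two_mul_ne (y : ℕ → Fin 2) (k : ℕ) : mu y (2 * k) ≠ mu y (2 * k + 1) := by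
  rw [mu_two_mul, mu_two_mul_add_one]
  omega

theorem mu_two_mul_add_one_eq_of_ne {y : ℕ → Fin 2} {k : ℕ} (h : y k ≠ y (k + 1)) :
    mu y (2 * k + 1) = mu y (2 * k + 2) := by
  rw [mu_two_mul_add_one, show 2 * k + 2 = 2 * (k + 1) by ring, mu_two_mul]
  omega

theorem prepend_length_add (p : List (Fin 2)) (w : ℕ → Fin 2) (n : ℕ) :
    prepend p w (p.length + n) = w n := by
  simp [prepend]

theorem prepend_nil (w : ℕ → Fin 2) : prepend [] w = w := by
  funext n
  simp [prepend]

theorem IsOverlapAt.mu {y : ℕ → Fin 2} {i p : ℕ} (h : IsOverlapAt y i p) :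
    IsOverlapAt (mu y) (2 * i) (2 * p) := by
  obtain ⟨hp, hper⟩ := h
  refine ⟨by omega, fun j hj => ?_⟩
  obtain ⟨r, rfl | rfl⟩ := Nat.even_or_odd' j
  · rw [← mul_add, ← mul_add, ← mul_add, mu_two_mul, mu_two_mul, hper r (by omega)]
  · rw [← add_assoc, ← mul_add, ← add_assoc, ← mul_add, ← mul_add, mu_two_mul_add_one,
      mu_two_mul_add_one, hper r (by omega)]

theorem IsOverlapAt.prepend {w : ℕ → Fin 2} {i p : ℕ} (h : IsOverlapAt w i p)
    (q : List (Fin 2)) :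
    IsOverlapAt (prepend q w) (q.length + i) p := by
  refine ⟨h.1, fun j hj => ?_⟩
  rw [add_assoc, add_assoc, add_assoc, prepend_length_add, prepend_length_add, ← add_assoc,
    h.2 j hj]

theorem OverlapFree.of_prepend_mu {p : List (Fin 2)} {y : ℕ → Fin 2}
    (hx : OverlapFree (prepend p (mu y))) : OverlapFree y :=
  overlapFree_iff_forall_not_isOverlapAt.2 fun _ _ h => (h.mu.prepend p).not_overlapFree hx

theorem eq_prepend_mu_of_forall_ne {x : ℕ → Fin 2} (L : ℕ)
    (h : ∀ k, x (L + 2 * k) ≠ x (L + 2 * k + 1)) :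
    x = prepend ((List.range L).map x) (mu fun k => x (L + 2 * k)) := by
  funext n
  rcases lt_or_ge n L with hn | hn
  · simp [prepend, hn]
  obtain ⟨m, rfl⟩ := Nat.exists_eq_add_of_le hn
  have hshift := prepend_length_add ((List.range L).map x) (mu fun k => x (L + 2 * k)) m
  rw [List.length_map, List.length_range] at hshift
  rw [hshift]
  obtain ⟨r, rfl | rfl⟩ := Nat.even_or_odd' m
  · rw [mu_two_mul]
  · rw [mu_two_mul_add_one, ← add_assoc]
    have := h r
    omega

theorem eq_of_prepend_mu_eq_of_length_eq {p p' : List (Fin 2)} {y y' : ℕ → Fin 2}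
    (h : prepend p (mu y) = prepend p' (mu y')) (hlen : p.length = p'.length) :
    p = p' ∧ y = y' := by
  refine ⟨List.ext_getElem hlen fun i hi hi' => ?_, funext fun k => ?_⟩
  · simpa [prepend, hi, hi'] using congrFun h i
  · have := congrFun h (p.length + 2 * k)
    rwa [prepend_length_add, hlen, prepend_length_add, mu_two_mul, mu_two_mul] at this

theorem length_le_two_of_mem_RS {p : List (Fin 2)} (hp : p ∈ RS) : p.length ≤ 2 := by
  rcases hp with rfl | rfl | rfl | rfl | rfl <;> simp

theorem mu_ne_prepend_of_mem_RS {p : List (Fin 2)} (hp : p ∈ RS) (hlen : p.length = 2)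
    (y w : ℕ → Fin 2) : mu y ≠ prepend p w := by
  intro h
  apply mu_two_mul_ne y 0
  rcases hp with rfl | rfl | rfl | rfl | rfl <;> simp at hlen <;> simp [h, prepend]

namespace OverlapFree

variable {x : ℕ → Fin 2}

theorem not_cube (hx : OverlapFree x) {n : ℕ} (h₁ : x n = x (n + 1))
    (h₂ : x (n + 1) = x (n + 2)) : False :=
  IsOverlapAt.not_overlapFree (i := n) (p := 1)
    ⟨one_pos, fun j hj => by interval_cases j <;> simpa [add_assoc]⟩ hx

theorem exists_eq_succ_within_four (hx : OverlapFree x) (n : ℕ) :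
    ∃ k ≤ 3, x (n + k) = x (n + k + 1) := by
  by_contra! h
  have h₀ := h 0 (by norm_num)
  have h₁ := h 1 (by norm_num)
  have h₂ := h 2 (by norm_num)
  have h₃ := h 3 (by norm_num)
  simp only [add_assoc, Nat.reduceAdd, add_zero] at h₀ h₁ h₂ h₃
  refine IsOverlapAt.not_overlapFree (i := n) (p := 2) ⟨two_pos, fun j hj => ?_⟩ hx
  interval_cases j <;> simp only [add_assoc, Nat.reduceAdd, add_zero] <;> omega

theorem not_eq_succ_three_apart (hx : OverlapFree x) {m : ℕ} (h₁ : x (m + 1) = x (m + 2))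
    (h₂ : x (m + 4) = x (m + 5)) : False := by
  -- these force `x m ⋯ x (m + 6) = abbabba`
  have c₀ : x m ≠ x (m + 1) := fun h => hx.not_cube h h₁
  have c₁ : x (m + 2) ≠ x (m + 3) := fun h => hx.not_cube (n := m + 1) h₁ h
  have c₂ : x (m + 3) ≠ x (m + 4) := fun h => hx.not_cube (n := m + 3) h h₂
  have c₃ : x (m + 5) ≠ x (m + 6) := fun h => hx.not_cube (n := m + 4) h₂ h
  refine IsOverlapAt.not_overlapFree (i := m) (p := 3) ⟨three_pos, fun j hj => ?_⟩ hx
  interval_cases j <;> simp only [add_assoc, Nat.reduceAdd, add_zero] <;> omega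

theorem eq_succ_two_or_four_after (hx : OverlapFree x) {n : ℕ} (hn : 0 < n)
    (h : x n = x (n + 1)) : x (n + 2) = x (n + 3) ∨ x (n + 4) = x (n + 5) := by
  obtain ⟨m, rfl⟩ : ∃ m, n = m + 1 := ⟨n - 1, by omega⟩
  obtain ⟨k, hk, hnext⟩ := hx.exists_eq_succ_within_four (m + 2)
  interval_cases k
  · exact (hx.not_cube h hnext).elim
  · exact .inl hnext
  · exact (hx.not_eq_succ_three_apart h hnext).elim
  · exact .inr hnext

theorem even_of_eq_succ (hx : OverlapFree x) {n : ℕ} (hn : 0 < n) (h : x n = x (n + 1))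
    {d : ℕ} (hd : x (n + d) = x (n + d + 1)) : Even d := by
  induction d using Nat.strong_induction_on generalizing n with
  | _ d ih =>
  obtain hd4 | hd4 := lt_or_ge d 4
  · interval_cases d
    · exact ⟨0, rfl⟩
    · exact (hx.not_cube h hd).elim
    · exact even_two
    · obtain ⟨m, rfl⟩ : ∃ m, n = m + 1 := ⟨n - 1, by omega⟩
      exact (hx.not_eq_succ_three_apart h hd).elim
  · rcases hx.eq_succ_two_or_four_after hn h with h₂ | h₄
    · obtain ⟨r, hr⟩ := ih (d - 2) (by omega) (by omega) h₂
        (by rwa [add_assoc, Nat.add_sub_cancel' (by omega)])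
      exact ⟨r + 1, by omega⟩
    · obtain ⟨r, hr⟩ := ih (d - 4) (by omega) (by omega) h₄
        (by rwa [add_assoc, Nat.add_sub_cancel' (by omega)])
      exact ⟨r + 2, by omega⟩

theorem mod_two_eq_of_eq_succ (hx : OverlapFree x) {m n : ℕ} (hm : 0 < m) (hn : 0 < n)
    (hxm : x m = x (m + 1)) (hxn : x n = x (n + 1)) : m % 2 = n % 2 := by
  rcases le_total m n with hmn | hnm
  · obtain ⟨d, rfl⟩ := Nat.exists_eq_add_of_le hmn
    obtain ⟨r, rfl⟩ := hx.even_of_eq_succ hm hxm hxn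
    omega
  · obtain ⟨d, rfl⟩ := Nat.exists_eq_add_of_le hnm
    obtain ⟨r, rfl⟩ := hx.even_of_eq_succ hn hxn hxm
    omega

theorem exists_mem_RS_forall_ne (hx : OverlapFree x) :
    ∃ L, (List.range L).map x ∈ RS ∧ ∀ k, x (L + 2 * k) ≠ x (L + 2 * k + 1) := by
  by_cases hodd : ∀ k, x (2 * k + 1) ≠ x (2 * k + 2)
  · refine ⟨1, ?_, fun k => by rw [add_comm]; exact hodd k⟩
    rcases Fin.exists_fin_two.mp ⟨x 0, rfl⟩ with h | h <;> simp [RS, h]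
  obtain ⟨k₀, hk₀⟩ := not_forall_not.mp hodd
  have heven : ∀ k, x (2 * k + 2) ≠ x (2 * k + 3) := fun k h =>
    absurd (hx.mod_two_eq_of_eq_succ (by omega) (by omega) hk₀ h) (by omega)
  by_cases h01 : x 0 = x 1
  · refine ⟨2, ?_, fun k => by rw [add_comm]; exact heven k⟩
    rcases Fin.exists_fin_two.mp ⟨x 0, rfl⟩ with h | h <;>
      simp [RS, List.range_succ, h, ← h01]
  · refine ⟨0, by simp [RS], fun k => ?_⟩
    rcases k with _ | k
    · simpa using h01
    · simpa [mul_add] using heven k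

theorem exists_mem_RS_eq_prepend_mu (hx : OverlapFree x) :
    ∃ p ∈ RS, ∃ y, OverlapFree y ∧ x = prepend p (mu y) := by
  obtain ⟨L, hL, hne⟩ := hx.exists_mem_RS_forall_ne
  have hfac := eq_prepend_mu_of_forall_ne L hne
  exact ⟨_, hL, _, (by rwa [hfac] at hx : OverlapFree _).of_prepend_mu, hfac⟩

theorem exists_ne_succ_ge (hx : OverlapFree x) (k : ℕ) : ∃ j ≥ k, x j ≠ x (j + 1) := by
  by_cases h : x k = x (k + 1)
  · exact ⟨k + 1, by omega, hx.not_cube h⟩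
  · exact ⟨k, le_rfl, h⟩

theorem length_mod_two_eq_of_prepend_mu_eq {y y' : ℕ → Fin 2} (hy : OverlapFree y)
    {p p' : List (Fin 2)} (h : prepend p (mu y) = prepend p' (mu y')) :
    p.length % 2 = p'.length % 2 := by
  by_contra hpar
  -- a square of `μ y` at an odd position `2j + 1` would be a square of `μ y'` at an even one
  obtain ⟨j, hj, hne⟩ := hy.exists_ne_succ_ge p'.length
  obtain ⟨m, hm⟩ : ∃ m, p.length + (2 * j + 1) = p'.length + 2 * m :=
    ⟨(p.length + 2 * j + 1 - p'.length) / 2, by omega⟩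
  apply mu_two_mul_ne y' m
  calc mu y' (2 * m) = prepend p (mu y) (p.length + (2 * j + 1)) := by
        rw [h, hm, prepend_length_add]
    _ = prepend p (mu y) (p.length + (2 * j + 2)) := by
        rw [prepend_length_add, prepend_length_add, mu_two_mul_add_one_eq_of_ne hne]
    _ = mu y' (2 * m + 1) := by
        rw [h, show p.length + (2 * j + 2) = p'.length + (2 * m + 1) by omega, prepend_length_add]

theorem eq_of_prepend_mu_eq_of_mem_RS {y y' : ℕ → Fin 2} (hy : OverlapFree y)
    {p p' : List (Fin 2)} (hp : p ∈ RS) (hp' : p' ∈ RS)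
    (h : prepend p (mu y) = prepend p' (mu y')) : p = p' ∧ y = y' := by
  refine eq_of_prepend_mu_eq_of_length_eq h ?_
  have hpar := hy.length_mod_two_eq_of_prepend_mu_eq h
  have := length_le_two_of_mem_RS hp
  have := length_le_two_of_mem_RS hp'
  by_contra hne
  rcases (by omega : p.length = 0 ∧ p'.length = 2 ∨ p.length = 2 ∧ p'.length = 0)
    with ⟨h₀, h₂⟩ | ⟨h₂, h₀⟩
  · rw [List.length_eq_zero_iff.mp h₀, prepend_nil] at h
    exact mu_ne_prepend_of_mem_RS hp' h₂ y _ h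
  · rw [List.length_eq_zero_iff.mp h₀, prepend_nil] at h
    exact mu_ne_prepend_of_mem_RS hp h₂ y' _ h.symm

end OverlapFree

theorem restivo_salemi_factorization :
    (∀ x : ℕ → Fin 2, OverlapFree x →
      ∃ p ∈ RS, ∃ y : ℕ → Fin 2, OverlapFree y ∧ x = prepend p (mu y)) ∧
    (∀ p ∈ RS, ∀ p' ∈ RS, ∀ y y' : ℕ → Fin 2, OverlapFree y → OverlapFree y' →
      prepend p (mu y) = prepend p' (mu y') → p = p' ∧ y = y') :=
  ⟨fun _ hx => hx.exists_mem_RS_eq_prepend_mu,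
    fun _ hp _ hp' _ _ hy _ h => hy.eq_of_prepend_mu_eq_of_mem_RS hp hp' h⟩
end

section
/- For every infinite binary word x, the following are equivalent: (i) 0·μ(x) is overlap-free and μ(x) begins with 010; (ii) 1·x is overlap-free and x begins with 00. -/
/-!
The word `0·μ(x)` is `μ(1·x)` with its first letter removed. An overlap of period `p` at
position `i` of a word `y` yields one of period `2p` at position `2i + 1` of `μ(y)`, hence one in
`0·μ(x)` when `y = 1·x`. Conversely, an overlap in `μ(z)` has even period, because `μ(z)` splits
into complementary pairs `z n, 1 - z n` which an odd shift misaligns; halving an overlap of even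
period `2p` in `μ(z)` gives an overlap of period `p` in `z`. The prefix conditions match since
`μ(x)` begins with `x 0, 1 - x 0, x 1`.
-/

/-- The factor of length `2p + 1` at position `i` is an overlap `a y a y a` with `|a y| = p`. -/
def HasOverlapAt (x : ℕ → Fin 2) (i p : ℕ) : Prop :=
  0 < p ∧ ∀ j ≤ p, x (i + j) = x (i + j + p)

theorem overlap_iff_exists_period {w : List (Fin 2)} :
    Overlap w ↔ ∃ p, 0 < p ∧ w.length = 2 * p + 1 ∧ ∀ j ≤ p, w[j]? = w[j + p]? := by
  constructor
  · rintro ⟨a, y, rfl⟩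
    refine ⟨y.length + 1, by omega, by simp; omega, fun j hj => ?_⟩
    have hl : [a] ++ y ++ [a] ++ y ++ [a] = (a :: y ++ [a]) ++ (y ++ [a]) := by simp
    have hr : [a] ++ y ++ [a] ++ y ++ [a] = (a :: y) ++ (a :: y ++ [a]) := by simp
    conv_lhs => rw [hl, List.getElem?_append_left (by simp; omega)]
    conv_rhs => rw [hr, List.getElem?_append_right (by simp)]
    simp
  · rintro ⟨p, hp, hlen, hper⟩
    have hy : ((w.drop 1).take (p - 1)).length = p - 1 := by simp; omega
    have hshift : ∀ n, p ≤ n → n ≤ 2 * p → w[n]? = w[n - p]? := fun n h₁ _ => by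
      rw [hper (n - p) (by omega), Nat.sub_add_cancel h₁]
    refine ⟨w[0], (w.drop 1).take (p - 1), List.ext_getElem? fun n => ?_⟩
    simp only [List.getElem?_append, List.length_append, List.length_singleton, hy,
      List.getElem?_take, List.getElem?_drop, List.getElem?_singleton]
    split_ifs <;> try omega
    · obtain rfl : n = 0 := by omega
      simp
    · congr 1; omega
    · rw [hshift n (by omega) (by omega), show n - p = 0 by omega]
      simp
    · rw [hshift n (by omega) (by omega)]; congr 1; omega
    · rw [hshift n (by omega) (by omega), hshift (n - p) (by omega) (by omega),
        show n - p - p = 0 by omega]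
      simp
    · exact List.getElem?_eq_none (by omega)

theorem overlapFree_iff_forall_not_hasOverlapAt {x : ℕ → Fin 2} :
    OverlapFree x ↔ ∀ i p, ¬ HasOverlapAt x i p := by
  constructor
  · rintro hx i p ⟨hp, hper⟩
    refine hx ((List.range (2 * p + 1)).map (fun j => x (i + j))) ⟨i, by simp⟩ ?_
    refine overlap_iff_exists_period.2 ⟨p, hp, by simp, fun j hj => ?_⟩
    simp [show j < 2 * p + 1 by omega, show j + p < 2 * p + 1 by omega,
      hper j hj, Nat.add_assoc]
  · rintro hx w ⟨i, hw⟩ hov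
    obtain ⟨p, hp, hlen, hper⟩ := overlap_iff_exists_period.1 hov
    refine hx i p ⟨hp, fun j hj => ?_⟩
    have := hper j hj
    rw [hw] at this
    simpa [List.getElem?_range, show j < 2 * p + 1 by omega, show j + p < 2 * p + 1 by omega,
      hlen, Nat.add_assoc] using this

theorem hasOverlapAt_comp_add {y : ℕ → Fin 2} {i p k : ℕ} :
    HasOverlapAt (fun n => y (n + k)) i p ↔ HasOverlapAt y (i + k) p := by
  refine and_congr_right fun _ => forall₂_congr fun j _ => ?_
  dsimp only
  rw [show i + j + k = i + k + j by omega, show i + j + p + k = i + k + j + p by omega]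

theorem mu_apply_two_mul (x : ℕ → Fin 2) (n : ℕ) : mu x (2 * n) = x n := by
  simp [mu]

theorem mu_apply_two_mul_add_one (x : ℕ → Fin 2) (n : ℕ) : mu x (2 * n + 1) = 1 - x n := by
  simp [mu, Nat.add_mod, Nat.add_div]

theorem mu_eq_mu_iff (x : ℕ → Fin 2) {m m' : ℕ} (h : m % 2 = m' % 2) :
    mu x m = mu x m' ↔ x (m / 2) = x (m' / 2) := by
  simp only [mu, h]
  split_ifs
  · rfl
  · exact sub_right_inj

theorem prepend_zero_mu (x : ℕ → Fin 2) :
    prepend [0] (mu x) = fun n => mu (prepend [1] x) (n + 1) := by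
  funext n
  rcases n with _ | n
  · simp [prepend, mu]
  · have hmod : (n + 1 + 1) % 2 = n % 2 := by omega
    have hdiv : (n + 1 + 1) / 2 = n / 2 + 1 := by omega
    simp [prepend, mu, hmod, hdiv]

theorem HasOverlapAt.mu_two_mul_add_one {y : ℕ → Fin 2} {i p : ℕ} (h : HasOverlapAt y i p) :
    HasOverlapAt (mu y) (2 * i + 1) (2 * p) := by
  obtain ⟨hp, hper⟩ := h
  refine ⟨by omega, fun j hj => (mu_eq_mu_iff y (by omega)).2 ?_⟩
  rw [show (2 * i + 1 + j) / 2 = i + (j + 1) / 2 by omega,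
    show (2 * i + 1 + j + 2 * p) / 2 = i + (j + 1) / 2 + p by omega]
  exact hper _ (by omega)

theorem apply_add_eq_apply_of_forall_lt {α : Type*} {f : ℕ → α} {m t : ℕ}
    (h : ∀ k < t, f (m + k + 1) = f (m + k)) : f (m + t) = f m := by
  induction t with
  | zero => rfl
  | succ t ih => rw [← Nat.add_assoc, h t (by omega), ih fun k hk => h k (by omega)]

theorem HasOverlapAt.even_of_mu {z : ℕ → Fin 2} {i p : ℕ} (h : HasOverlapAt (mu z) i p) :
    Even p := by
  -- With p = 2t + 1, comparing positions 2n + 1 and 2n + 2 of the window with their shifts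
  -- makes z constant on [m, m + t], while position 2m gives z (m + t) = 1 - z m.
  refine (Nat.even_or_odd p).resolve_right ?_
  rintro ⟨t, rfl⟩
  have heven : ∀ n, i ≤ 2 * n → 2 * n ≤ i + (2 * t + 1) → z (n + t) = 1 - z n := by
    intro n h₁ h₂
    have := h.2 (2 * n - i) (by omega)
    rw [show i + (2 * n - i) = 2 * n by omega, show 2 * n + (2 * t + 1) = 2 * (n + t) + 1 by omega,
      mu_apply_two_mul, mu_apply_two_mul_add_one] at this
    rw [this, sub_sub_cancel]
  have hodd : ∀ n, i ≤ 2 * n + 1 → 2 * n + 1 ≤ i + (2 * t + 1) → z (n + t + 1) = 1 - z n := by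
    intro n h₁ h₂
    have := h.2 (2 * n + 1 - i) (by omega)
    rw [show i + (2 * n + 1 - i) = 2 * n + 1 by omega,
      show 2 * n + 1 + (2 * t + 1) = 2 * (n + t + 1) by omega,
      mu_apply_two_mul, mu_apply_two_mul_add_one] at this
    exact this.symm
  set m := (i + 1) / 2
  have hconst : z (m + t) = z m := apply_add_eq_apply_of_forall_lt fun k hk => by
    have h₁ := hodd (m + k) (by omega) (by omega)
    have h₂ := heven (m + k + 1) (by omega) (by omega)
    rw [show m + k + 1 + t = m + k + t + 1 by omega, h₁] at h₂
    exact (sub_right_inj.1 h₂).symm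
  have hflip := heven m (by omega) (by omega)
  rw [hconst] at hflip
  omega

theorem HasOverlapAt.of_mu {z : ℕ → Fin 2} {i p : ℕ} (h : HasOverlapAt (mu z) i p) :
    HasOverlapAt z (i / 2) (p / 2) := by
  obtain ⟨t, rfl⟩ := h.even_of_mu.two_dvd
  obtain ⟨hp, hper⟩ := h
  refine ⟨by omega, fun j hj => ?_⟩
  have := (mu_eq_mu_iff z (by omega)).1 (hper (2 * j) (by omega))
  rwa [show (i + 2 * j) / 2 = i / 2 + j by omega,
    show (i + 2 * j + 2 * t) / 2 = i / 2 + j + 2 * t / 2 by omega] at this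

theorem overlapFree_prepend_zero_mu_iff (x : ℕ → Fin 2) :
    OverlapFree (prepend [0] (mu x)) ↔ OverlapFree (prepend [1] x) := by
  simp only [overlapFree_iff_forall_not_hasOverlapAt, prepend_zero_mu]
  constructor
  · exact fun h i p hx => h (2 * i) (2 * p) (hasOverlapAt_comp_add.2 hx.mu_two_mul_add_one)
  · exact fun h i p hx => h _ _ (hasOverlapAt_comp_add.1 hx).of_mu

theorem beginsWith_mu_iff (x : ℕ → Fin 2) :
    BeginsWith (mu x) [0, 1, 0] ↔ BeginsWith x [0, 0] := by
  simp only [BeginsWith, List.length_cons, List.length_nil, Nat.forall_lt_succ_right,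
    Nat.not_lt_zero, IsEmpty.forall_iff, forall_const, true_and]
  simp [mu]

theorem zero_mu_begins_010_iff (x : ℕ → Fin 2) :
    (OverlapFree (prepend [0] (mu x)) ∧ BeginsWith (mu x) [0, 1, 0]) ↔
      (OverlapFree (prepend [1] x) ∧ BeginsWith x [0, 0]) := by
  rw [overlapFree_prepend_zero_mu_iff, beginsWith_mu_iff]
end

section
/- For every infinite binary word x, the following are equivalent: (i) 00·μ(x) is overlap-free and 0·μ(x) begins with 0; (ii) 1·x is overlap-free and x begins with 101. -/
/-!
Write `y = 00·μ(x)` and `z = 1·x`. Since `μ(z) = 10·μ(x)`, the words `y` and `μ(z)` differ only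
in their first letter. An overlap of period `d` in `z` yields one of period `2d` in `μ(z)` starting at
any odd position, hence one in `y`. Conversely an overlap in `μ(x)` has even period: on an odd
period the letters would alternate along the whole overlap, since every step `i → i + 1` of it is
a block `μ(a)` either at `i` or at `i + d`; halving an even period gives an overlap of `x`.
So the overlaps of `z` match those of `y` that start after position `0`, and it remains to see that
`y` has no overlap starting at `0` exactly when `x` begins with `101`: otherwise `y` begins with
`000`, `001010` or `0010010`, and if it begins with `0010011` an overlap at `0` would repeat a
factor `00` at a block boundary of `μ(x)`.
-/

def factor (y : ℕ → Fin 2) (p n : ℕ) : List (Fin 2) :=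
  (List.range n).map fun j => y (p + j)

def OverlapAt (y : ℕ → Fin 2) (p d : ℕ) : Prop :=
  0 < d ∧ ∀ j ≤ d, y (p + j + d) = y (p + j)

section Factor

variable (y : ℕ → Fin 2)

lemma length_factor (p n : ℕ) : (factor y p n).length = n := by
  simp [factor]

lemma factor_add (p m n : ℕ) : factor y p (m + n) = factor y p m ++ factor y (p + m) n := by
  simp [factor, List.range_add, Nat.add_assoc]

lemma factor_one (p : ℕ) : factor y p 1 = [y p] := by
  simp [factor]

variable {y} in
lemma factor_eq_factor_iff {p q n : ℕ} :
    factor y p n = factor y q n ↔ ∀ j < n, y (p + j) = y (q + j) := by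
  simp [factor, List.map_inj_left]

lemma factor_two_mul_add_three (p n : ℕ) :
    factor y p (2 * n + 3) = [y p] ++ factor y (p + 1) n ++ [y (p + n + 1)] ++
      factor y (p + n + 2) n ++ [y (p + 2 * n + 2)] := by
  rw [show 2 * n + 3 = 1 + n + 1 + n + 1 by omega]
  simp only [factor_add, factor_one]
  ring_nf

lemma overlap_factor_iff (p n : ℕ) : Overlap (factor y p (2 * n + 3)) ↔ OverlapAt y p (n + 1) := by
  rw [factor_two_mul_add_three]
  constructor
  · rintro ⟨a, u, h⟩
    have hu : u.length = n := by
      have := congrArg List.length h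
      simp only [List.length_append, length_factor, List.length_singleton] at this
      omega
    obtain ⟨h, h5⟩ := List.append_inj' h rfl
    obtain ⟨h, h4⟩ := List.append_inj' h (by rw [length_factor, hu])
    obtain ⟨h, h3⟩ := List.append_inj' h rfl
    obtain ⟨h1, h2⟩ := List.append_inj' h (by rw [length_factor, hu])
    simp only [List.singleton_inj] at h1 h3 h5
    refine ⟨n.succ_pos, fun j hj => ?_⟩
    obtain hj' | rfl := hj.lt_or_eq
    · rcases j with _ | i
      · simp [← add_assoc, h1, h3]
      · have := factor_eq_factor_iff.1 (h4.trans h2.symm) i (by omega)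
        rwa [show p + (i + 1) + (n + 1) = p + n + 2 + i by ring,
          show p + (i + 1) = p + 1 + i by ring]
    · rw [show p + (n + 1) + (n + 1) = p + 2 * n + 2 by ring, ← add_assoc, h5, h3]
  · rintro ⟨-, h⟩
    have e1 : y (p + n + 1) = y p := by simpa [← add_assoc] using h 0 (by omega)
    have e2 : factor y (p + n + 2) n = factor y (p + 1) n := by
      refine factor_eq_factor_iff.2 fun j hj => ?_
      have := h (j + 1) (by omega)
      rwa [show p + (j + 1) + (n + 1) = p + n + 2 + j by ring,
        show p + (j + 1) = p + 1 + j by ring] at this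
    have e3 : y (p + 2 * n + 2) = y p := by
      rw [show p + 2 * n + 2 = p + (n + 1) + (n + 1) by ring, h (n + 1) le_rfl, ← add_assoc, e1]
    exact ⟨y p, factor y (p + 1) n, by rw [e1, e2, e3]⟩

lemma overlapFree_iff_forall_not_overlapAt : OverlapFree y ↔ ∀ p d, ¬ OverlapAt y p d := by
  constructor
  · rintro h p d ⟨hd, hper⟩
    obtain ⟨n, rfl⟩ : ∃ n, d = n + 1 := ⟨d - 1, by omega⟩
    exact h _ ⟨p, by rw [length_factor]; rfl⟩ ((overlap_factor_iff y p n).2 ⟨hd, hper⟩)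
  · rintro h _ ⟨i, hw⟩ ⟨a, u, rfl⟩
    rw [show ([a] ++ u ++ [a] ++ u ++ [a]).length = 2 * u.length + 3 by simp; ring] at hw
    exact h i _ ((overlap_factor_iff y i u.length).1 (by rw [factor, ← hw]; exact ⟨a, u, rfl⟩))

end Factor

lemma OverlapAt.congr {y y' : ℕ → Fin 2} {p d : ℕ} (h : OverlapAt y p d)
    (hyy' : ∀ n ≥ p, y n = y' n) : OverlapAt y' p d :=
  ⟨h.1, fun j hj => by rw [← hyy' _ (by omega), ← hyy' _ (by omega), h.2 j hj]⟩

section Mu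

open Fin.NatCast

lemma mu_apply (x : ℕ → Fin 2) (n : ℕ) : mu x n = x (n / 2) + n := by
  rw [mu]
  rcases Nat.mod_two_eq_zero_or_one n with h | h
  · rw [if_pos h, Fin.natCast_eq_zero.mpr (Nat.dvd_of_mod_eq_zero h), add_zero]
  · have hn : (n : Fin 2) = 1 := by ext; simp [Fin.val_natCast, h]
    rw [if_neg (by omega), hn]
    generalize x (n / 2) = a
    revert a; decide

variable {x : ℕ → Fin 2}

lemma mu_succ_of_even {n : ℕ} (hn : Even n) : mu x (n + 1) = mu x n + 1 := by
  rw [mu_apply, mu_apply, show (n + 1) / 2 = n / 2 by grind, Nat.cast_succ, add_assoc]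

lemma mu_add_two_mul_eq_iff (n k : ℕ) : mu x (n + 2 * k) = mu x n ↔ x (n / 2 + k) = x (n / 2) := by
  have h2k : ((2 * k : ℕ) : Fin 2) = 0 := Fin.natCast_eq_zero.2 (dvd_mul_right 2 k)
  rw [mu_apply, mu_apply, show (n + 2 * k) / 2 = n / 2 + k by omega, Nat.cast_add, h2k, add_zero,
    add_left_inj]

lemma OverlapAt.map_mu {p d : ℕ} (h : OverlapAt x p d) : OverlapAt (mu x) (2 * p + 1) (2 * d) := by
  refine ⟨by have := h.1; omega, fun j hj => (mu_add_two_mul_eq_iff _ _).2 ?_⟩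
  rw [show (2 * p + 1 + j) / 2 = p + (j + 1) / 2 by omega]
  exact h.2 _ (by omega)

lemma even_of_overlapAt_mu {p d : ℕ} (h : OverlapAt (mu x) p d) : Even d := by
  by_contra hodd
  rw [Nat.not_even_iff_odd] at hodd
  have hstep : ∀ i < d, mu x (p + i + 1) = mu x (p + i) + 1 := by
    intro i hi
    rcases Nat.even_or_odd (p + i) with he | ho
    · exact mu_succ_of_even he
    · have := mu_succ_of_even (x := x) (ho.add_odd hodd)
      rwa [show p + i + d + 1 = p + (i + 1) + d by ring, h.2 _ hi, h.2 _ hi.le] at this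
  have hwalk : ∀ i ≤ d, mu x (p + i) = mu x p + i := by
    intro i hi
    induction i with
    | zero => simp
    | succ i ih => rw [← add_assoc, hstep i hi, ih (by omega), Nat.cast_succ, add_assoc]
  have hd : (d : Fin 2) = 1 := by ext; simp [Fin.val_natCast, Nat.odd_iff.1 hodd]
  have := h.2 0 d.zero_le
  rw [add_zero, hwalk d le_rfl, hd] at this
  generalize mu x p = a at this
  revert a; decide

lemma OverlapAt.of_map_mu {p d : ℕ} (h : OverlapAt (mu x) p d) : OverlapAt x (p / 2) (d / 2) := by
  obtain ⟨e, rfl⟩ := even_iff_two_dvd.1 (even_of_overlapAt_mu h)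
  refine ⟨by have := h.1; omega, fun j hj => ?_⟩
  have := (mu_add_two_mul_eq_iff _ _).1 (h.2 (2 * j) (by omega))
  rw [Nat.mul_div_cancel_left _ two_pos]
  rwa [show (p + 2 * j) / 2 = p / 2 + j by omega] at this

end Mu

section ZeroZeroMu

variable {x : ℕ → Fin 2}

lemma prepend_zero_zero_mu_eq_mu_prepend_one {n : ℕ} (hn : 0 < n) :
    prepend [0, 0] (mu x) n = mu (prepend [1] x) n := by
  obtain rfl | ⟨m, rfl⟩ : n = 1 ∨ ∃ m, n = m + 2 := by
    rcases n with _ | _ | m <;> simp_all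
  · rfl
  · simp [prepend, mu, Nat.add_mod_right, Nat.add_div_right]

lemma prepend_zero_zero_mu_add_three {n : ℕ} (hn : Even n) :
    prepend [0, 0] (mu x) (n + 3) = prepend [0, 0] (mu x) (n + 2) + 1 := by
  simpa [prepend] using mu_succ_of_even (x := x) hn

lemma prefix_eq_of_forall_not_overlapAt (h : ∀ p d, ¬ OverlapAt (prepend [0, 0] (mu x)) p d) :
    x 0 = 1 ∧ x 1 = 0 ∧ x 2 = 1 := by
  have h0 : x 0 = 1 := Fin.eq_one_of_ne_zero _ fun h0 =>
    h 0 1 ⟨one_pos, fun j hj => by interval_cases j <;> simp [prepend, mu, h0]⟩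
  have h1 : x 1 = 0 := by
    by_contra h1
    replace h1 := Fin.eq_one_of_ne_zero _ h1
    exact h 1 2 ⟨two_pos, fun j hj => by interval_cases j <;> simp [prepend, mu, h0, h1]⟩
  have h2 : x 2 = 1 := Fin.eq_one_of_ne_zero _ fun h2 =>
    h 0 3 ⟨three_pos, fun j hj => by interval_cases j <;> simp [prepend, mu, h0, h1, h2]⟩
  exact ⟨h0, h1, h2⟩

lemma not_overlapAt_zero_of_prefix_eq (hx : x 0 = 1 ∧ x 1 = 0 ∧ x 2 = 1) (d : ℕ) :
    ¬ OverlapAt (prepend [0, 0] (mu x)) 0 d := by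
  obtain ⟨h0, h1, h2⟩ := hx
  rintro ⟨hd, h⟩
  simp only [zero_add] at h
  rcases Nat.even_or_odd d with heven | hodd
  · have hd2 : 2 ≤ d := by obtain ⟨k, rfl⟩ := heven; omega
    have := prepend_zero_zero_mu_add_three (x := x) (heven.tsub even_two)
    rw [show d - 2 + 3 = 1 + d by omega, show d - 2 + 2 = 0 + d by omega, h 1 (by omega),
      h 0 (by omega)] at this
    simp [prepend] at this
  obtain rfl | rfl | hd5 : d = 1 ∨ d = 3 ∨ 5 ≤ d := by
    obtain ⟨k, rfl⟩ := hodd; omega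
  · simpa [prepend, mu, h0] using h 1 le_rfl
  · simpa [prepend, mu, h0, h2] using h 3 le_rfl
  · have := prepend_zero_zero_mu_add_three (x := x) hodd.add_one
    rw [show d + 1 + 3 = 4 + d by omega, show d + 1 + 2 = 3 + d by omega, h 4 (by omega),
      h 3 (by omega)] at this
    simp [prepend, mu, h0, h1] at this

end ZeroZeroMu

lemma beginsWith_three_iff (x : ℕ → Fin 2) (a b c : Fin 2) :
    BeginsWith x [a, b, c] ↔ x 0 = a ∧ x 1 = b ∧ x 2 = c := by
  refine ⟨fun h => ⟨h 0 (by simp), h 1 (by simp), h 2 (by simp)⟩, ?_⟩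
  rintro ⟨ha, hb, hc⟩ i hi
  simp only [List.length_cons, List.length_nil] at hi
  interval_cases i <;> assumption

theorem zerozero_mu_begins_0_iff (x : ℕ → Fin 2) :
    (OverlapFree (prepend [0, 0] (mu x)) ∧ BeginsWith (prepend [0] (mu x)) [0]) ↔
      (OverlapFree (prepend [1] x) ∧ BeginsWith x [1, 0, 1]) := by
  have hagree : ∀ n ≥ 1, prepend [0, 0] (mu x) n = mu (prepend [1] x) n :=
    fun n hn => prepend_zero_zero_mu_eq_mu_prepend_one hn
  have hzero : BeginsWith (prepend [0] (mu x)) [0] := by simp [BeginsWith, prepend]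
  simp only [overlapFree_iff_forall_not_overlapAt, beginsWith_three_iff, hzero, and_true]
  constructor
  · intro hy
    refine ⟨fun p d hz => hy _ _ (hz.map_mu.congr fun n hn => (hagree n (by omega)).symm),
      prefix_eq_of_forall_not_overlapAt hy⟩
  · rintro ⟨hz, hx⟩ (_ | p) d hy
    · exact not_overlapAt_zero_of_prefix_eq hx d hy
    · exact hz _ _ (hy.congr fun n hn => hagree n (by omega)).of_map_mu
end
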